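/- Segment lower bound validity: with a, b, w₁ = a₂ - b₂ > 0, w₂ = b₁ - a₁ > 0 as above, if c minimizes w₁f₁ + w₂f₂ over the feasible set and (c₁,c₂) = (f₁(c), f₂(c)) satisfies w₁c₁ + w₂c₂ ≥ w₁a₁ + w₂a₂ (the point lies on or above the line through a and b), then the segment [a,b] (the convex hull of {a,b}) is a valid lower bound set for the portion of the feasible image Y restricted to {y : a₁ ≤ y₁ ≤ b₁}: for every y ∈ Y with a₁ ≤ y₁ ≤ b₁ there exists ℓ ∈ [a,b] with ℓ ≤ y componentwise. -/
import Mathlib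

theorem segment_lower_bound_validity (a b : ℝ × ℝ) (h1 : a.1 < b.1) (h2 : b.2 < a.2)
    (Y : Set (ℝ × ℝ)) (c : ℝ × ℝ)
    (hc : ∀ y ∈ Y, (a.2 - b.2) * c.1 + (b.1 - a.1) * c.2
      ≤ (a.2 - b.2) * y.1 + (b.1 - a.1) * y.2)
    (hline : (a.2 - b.2) * a.1 + (b.1 - a.1) * a.2
      ≤ (a.2 - b.2) * c.1 + (b.1 - a.1) * c.2)
    (hY : ∀ y ∈ Y, b.2 ≤ y.2 ∧ a.1 ≤ y.1) :
    ∀ y ∈ Y, a.1 ≤ y.1 → y.1 ≤ b.1 →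
      ∃ l ∈ segment ℝ a b, l.1 ≤ y.1 ∧ l.2 ≤ y.2 := by
  intro y hy hay hyb
  have hd : (0:ℝ) < b.1 - a.1 := by linarith
  set t : ℝ := (y.1 - a.1) / (b.1 - a.1) with ht
  have ht0 : 0 ≤ t := div_nonneg (by linarith) hd.le
  have ht1 : t ≤ 1 := by rw [ht, div_le_one hd]; linarith
  have htd : t * (b.1 - a.1) = y.1 - a.1 := by
    rw [ht]; field_simp
  refine ⟨(1 - t) • a + t • b, ⟨1 - t, t, by linarith, ht0, by ring, rfl⟩, ?_, ?_⟩
  · have h : ((1 - t) • a + t • b).1 = a.1 + t * (b.1 - a.1) := by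
      simp [Prod.smul_fst]; ring
    rw [h, htd]; linarith
  · have hl2 : ((1 - t) • a + t • b).2 = a.2 - t * (a.2 - b.2) := by
      simp [Prod.smul_snd]; ring
    rw [hl2]
    have key := le_trans hline (hc y hy)
    have e : (b.1 - a.1) * (t * (a.2 - b.2)) = (y.1 - a.1) * (a.2 - b.2) := by
      rw [show (b.1 - a.1) * (t * (a.2 - b.2)) = (t * (b.1 - a.1)) * (a.2 - b.2) from by ring,
        htd]
    have h3 : (b.1 - a.1) * (a.2 - t * (a.2 - b.2)) ≤ (b.1 - a.1) * y.2 := by nlinarith [key, e]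
    exact le_of_mul_le_mul_left h3 hd
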